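/- arXiv:2002.03673 — 5 statements merged into one kernel-verified Lean document; each statement's English description precedes it below -/
import Mathlib

section
/- Let F = (1-κ*)G + κ*H with κ* ∈ [0,1), and suppose β = inf_{S: H(S)>0} G(S)/H(S) > 0. Then inf_{S: H(S)>0} F(S)/H(S) = κ* + (1-κ*)β > κ*, i.e., the maximum-proportion estimator has positive bias (1-κ*)β. -/
open MeasureTheory ENNReal

theorem stmt_2 {X : Type*} [MeasurableSpace X]
    (F G H : Measure X) [IsProbabilityMeasure F] [IsProbabilityMeasure G]
    [IsProbabilityMeasure H]
    (κ : ℝ) (hκ0 : 0 ≤ κ) (hκ1 : κ < 1)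
    (hF : F = ENNReal.ofReal (1 - κ) • G + ENNReal.ofReal κ • H)
    (β : ℝ≥0∞)
    (hβ : β = ⨅ (S : Set X) (_ : MeasurableSet S) (_ : 0 < H S), G S / H S)
    (hβpos : 0 < β) :
    (⨅ (S : Set X) (_ : MeasurableSet S) (_ : 0 < H S), F S / H S) =
        ENNReal.ofReal κ + ENNReal.ofReal (1 - κ) * β ∧
      ENNReal.ofReal κ <
        ⨅ (S : Set X) (_ : MeasurableSet S) (_ : 0 < H S), F S / H S := by
  set c := ENNReal.ofReal (1 - κ) with hc
  set k := ENNReal.ofReal κ with hk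
  have hc0 : c ≠ 0 := by
    simp [hc, ENNReal.ofReal_eq_zero]; linarith
  have hctop : c ≠ ∞ := ENNReal.ofReal_ne_top
  have hktop : k ≠ ∞ := ENNReal.ofReal_ne_top
  have hne : Nonempty {S : Set X // MeasurableSet S ∧ 0 < H S} :=
    ⟨⟨Set.univ, MeasurableSet.univ, by simp⟩⟩
  -- rewrite nested infima as infima over a subtype
  have hsub : ∀ (μ : Measure X),
      (⨅ (S : Set X) (_ : MeasurableSet S) (_ : 0 < H S), μ S / H S)
        = ⨅ t : {S : Set X // MeasurableSet S ∧ 0 < H S}, μ t.1 / H t.1 := by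
    intro μ
    rw [show (⨅ t : {S : Set X // MeasurableSet S ∧ 0 < H S}, μ t.1 / H t.1)
        = ⨅ (S : Set X) (_ : MeasurableSet S ∧ 0 < H S), μ S / H S from iInf_subtype]
    simp_rw [iInf_and]
  -- pointwise computation
  have hpt : ∀ t : {S : Set X // MeasurableSet S ∧ 0 < H S},
      F t.1 / H t.1 = k + c * (G t.1 / H t.1) := by
    rintro ⟨S, hS, hHS⟩
    have h0 : H S ≠ 0 := hHS.ne'
    have htop : H S ≠ ∞ := measure_ne_top H S
    simp only [hF, Measure.coe_add, Measure.coe_smul, Pi.add_apply, Pi.smul_apply,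
      smul_eq_mul]
    rw [ENNReal.add_div, mul_div_assoc, mul_div_assoc, ENNReal.div_self h0 htop,
      mul_one, add_comm]
  have key : (⨅ (S : Set X) (_ : MeasurableSet S) (_ : 0 < H S), F S / H S)
      = k + c * β := by
    rw [hsub F, iInf_congr hpt, ← ENNReal.add_iInf,
      ← ENNReal.mul_iInf_of_ne hc0 hctop, hβ, hsub G]
  refine ⟨key, ?_⟩
  rw [key]
  exact ENNReal.lt_add_right hktop (by simp [hc0, hβpos.ne'])
end

section
/- Let F = (1-κ*)G + κ*H with κ* ∈ (0,1), and let A be measurable with F(A) > 0, G(A^c) > 0. With H' as in the regrouping construction, the maximum proportion of H' in F, namely inf_{S: H'(S)>0} F(S)/H'(S), equals κ' = κ* + (1-κ*)G(A). -/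
open MeasureTheory ENNReal

theorem stmt_7 {X : Type*} [MeasurableSpace X]
    (F G H : Measure X) [IsProbabilityMeasure F] [IsProbabilityMeasure G]
    [IsProbabilityMeasure H]
    (κ : ℝ) (hκ0 : 0 < κ) (hκ1 : κ < 1)
    (hF : F = ENNReal.ofReal (1 - κ) • G + ENNReal.ofReal κ • H)
    (A : Set X) (hA : MeasurableSet A) (hFA : 0 < F A) (hGAc : 0 < G Aᶜ)
    (H' : Measure X)
    (hH' : H' = (ENNReal.ofReal (1 - κ) * G A + ENNReal.ofReal κ)⁻¹ •
        (ENNReal.ofReal (1 - κ) • G.restrict A + ENNReal.ofReal κ • H)) :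
    (⨅ (S : Set X) (_ : MeasurableSet S) (_ : 0 < H' S), F S / H' S) =
      ENNReal.ofReal κ + ENNReal.ofReal (1 - κ) * G A := by
  set a := ENNReal.ofReal (1 - κ) with ha
  set b := ENNReal.ofReal κ with hb
  have hb0 : b ≠ 0 := by
    simp [hb, ENNReal.ofReal_eq_zero]; linarith
  set k : ℝ≥0∞ := a * G A + b with hk
  have hk0 : k ≠ 0 := by
    intro h
    rw [hk, add_eq_zero] at h
    exact hb0 h.2
  have hkt : k ≠ ∞ := by
    refine ENNReal.add_ne_top.2 ⟨ENNReal.mul_ne_top ENNReal.ofReal_ne_top ?_, ENNReal.ofReal_ne_top⟩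
    exact (measure_lt_top G A).ne
  have hH'app : ∀ S : Set X, MeasurableSet S → H' S = k⁻¹ * (a * G (S ∩ A) + b * H S) := by
    intro S hS
    rw [hH']
    simp [Measure.add_apply, Measure.smul_apply, smul_eq_mul, Measure.restrict_apply hS, hk, mul_add]
  have hFapp : ∀ S : Set X, F S = a * G S + b * H S := by
    intro S
    rw [hF]; simp [Measure.add_apply, Measure.smul_apply, smul_eq_mul]
  have goal_eq : ENNReal.ofReal κ + ENNReal.ofReal (1 - κ) * G A = k := by
    rw [hk, add_comm]
  rw [goal_eq]
  apply le_antisymm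
  · -- upper bound via S = A
    have hH'A : H' A = k⁻¹ * F A := by
      rw [hH'app A hA, Set.inter_self, hFapp A]
    have hH'Apos : 0 < H' A := by
      rw [hH'A]
      exact ENNReal.mul_pos (ENNReal.inv_ne_zero.2 hkt) hFA.ne'
    refine le_trans ?_ (le_of_eq rfl)
    calc (⨅ (S : Set X) (_ : MeasurableSet S) (_ : 0 < H' S), F S / H' S)
        ≤ F A / H' A := by
          exact (iInf_le _ A).trans ((iInf_le _ hA).trans (iInf_le _ hH'Apos))
      _ = k := by
          rw [hH'A, div_eq_mul_inv, ENNReal.mul_inv (Or.inr (measure_ne_top F A)) (Or.inr hFA.ne'),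
            inv_inv, mul_comm k, ← mul_assoc,
            ENNReal.mul_inv_cancel hFA.ne' (measure_ne_top F A), one_mul]
  · -- lower bound
    refine le_iInf fun S => le_iInf fun hS => le_iInf fun hpos => ?_
    have hH'S : H' S = k⁻¹ * (a * G (S ∩ A) + b * H S) := hH'app S hS
    have hH'top : H' S ≠ ∞ := by
      rw [hH'S]
      exact ENNReal.mul_ne_top (ENNReal.inv_ne_top.2 hk0)
        (ENNReal.add_ne_top.2 ⟨ENNReal.mul_ne_top ENNReal.ofReal_ne_top (measure_ne_top G _),
          ENNReal.mul_ne_top ENNReal.ofReal_ne_top (measure_ne_top H _)⟩)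
    rw [ENNReal.le_div_iff_mul_le (Or.inl hpos.ne') (Or.inl hH'top)]
    rw [hH'S, ← mul_assoc, ENNReal.mul_inv_cancel hk0 hkt, one_mul, hFapp S]
    gcongr
    exact Set.inter_subset_left
end

section
/- Let F = (1-κ*)G + κ*H with κ* ∈ (0,1), and fix a measurable set A with F(A) > 0 and G(A^c) > 0. Let H' = ((1-κ*)G_A + κ*H)/((1-κ*)G(A) + κ*) and, for γ = κ* > 0, let H̃' = (F_A + γH)/(F(A) + γ). Then for every ε > 0, if F(A) < ε, then for all measurable S, |H'(S) - H̃'(S)| ≤ C·ε for a constant C depending only on κ* and γ (in particular C can be taken as (1 + γ + κ*)/(κ*γ)). -/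
/-! Put `μ = (1-κ)G_A + κH` and `ν = κH_A`. Then `H'` is `μ` normalized, and since
`F_A = (1-κ)G_A + κH_A`, `H̃'` is `μ + ν` normalized. Adding `ν` moves a normalized measure by at
most `ν(X)/μ(X)` on every set, and here `ν(X) = κH(A) ≤ F(A) < ε` while `μ(X) ≥ κ`, so the
difference is below `ε/κ`. -/

open MeasureTheory ENNReal

lemma abs_div_sub_add_div_add_le {a c s t : ℝ} (ha : 0 ≤ a) (hac : a ≤ c) (hc : 0 < c)
    (hs : 0 ≤ s) (hst : s ≤ t) :
    |a / c - (a + s) / (c + t)| ≤ t / c := by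
  have hct : 0 < c + t := by linarith
  have hnum : |a * (c + t) - c * (a + s)| ≤ c * t := by
    rw [abs_le]
    constructor <;> nlinarith [mul_le_mul_of_nonneg_left hst hc.le, mul_nonneg ha hs]
  rw [div_sub_div _ _ hc.ne' hct.ne', abs_div, abs_of_pos (mul_pos hc hct),
    div_le_div_iff₀ (mul_pos hc hct) hc]
  nlinarith [mul_le_mul_of_nonneg_right hnum hc.le, mul_nonneg hc.le (mul_self_nonneg t)]

lemma abs_toReal_inv_smul_sub_inv_smul_add_le {X : Type*} [MeasurableSpace X]
    (μ ν : Measure X) [IsFiniteMeasure μ] [IsFiniteMeasure ν] (hμ : μ Set.univ ≠ 0)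
    (S : Set X) :
    |(((μ Set.univ)⁻¹ • μ) S).toReal - ((((μ + ν) Set.univ)⁻¹ • (μ + ν)) S).toReal|
      ≤ (ν Set.univ).toReal / (μ Set.univ).toReal := by
  simp only [Measure.smul_apply, Measure.add_apply, smul_eq_mul, ENNReal.toReal_mul,
    ENNReal.toReal_inv, ENNReal.toReal_add (measure_ne_top μ _) (measure_ne_top ν _),
    inv_mul_eq_div]
  exact abs_div_sub_add_div_add_le ENNReal.toReal_nonneg
    (ENNReal.toReal_mono (measure_ne_top μ _) (measure_mono (Set.subset_univ S)))
    (ENNReal.toReal_pos hμ (measure_ne_top μ _)) ENNReal.toReal_nonneg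
    (ENNReal.toReal_mono (measure_ne_top ν _) (measure_mono (Set.subset_univ S)))

theorem stmt_11_general {X : Type*} [MeasurableSpace X]
    (F G H : Measure X) [IsProbabilityMeasure G]
    [IsProbabilityMeasure H]
    (κ : ℝ) (hκ0 : 0 < κ)
    (hF : F = ENNReal.ofReal (1 - κ) • G + ENNReal.ofReal κ • H)
    (A : Set X)
    (γ : ℝ) (hγ : γ = κ)
    (H' H'tilde : Measure X)
    (hH' : H' = (ENNReal.ofReal (1 - κ) * G A + ENNReal.ofReal κ)⁻¹ •
        (ENNReal.ofReal (1 - κ) • G.restrict A + ENNReal.ofReal κ • H))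
    (hH'tilde : H'tilde = (F A + ENNReal.ofReal γ)⁻¹ •
        (F.restrict A + ENNReal.ofReal γ • H)) :
    ∀ ε : ℝ, 0 < ε → F A < ENNReal.ofReal ε →
      ∀ S : Set X, MeasurableSet S →
        |(H' S).toReal - (H'tilde S).toReal| ≤ (1 + γ + κ) / (κ * γ) * ε := by
  subst γ
  intro ε hε hFAε S _
  set μ := ENNReal.ofReal (1 - κ) • G.restrict A + ENNReal.ofReal κ • H
  set ν := ENNReal.ofReal κ • H.restrict A
  have hμ : μ Set.univ = ENNReal.ofReal (1 - κ) * G A + ENNReal.ofReal κ := by simp [μ]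
  have hFA : F A = ENNReal.ofReal (1 - κ) * G A + ν Set.univ := by simp [hF, ν]
  have : IsFiniteMeasure μ := ⟨by rw [hμ]; finiteness⟩
  have : IsFiniteMeasure ν := ⟨by simp [ν]; finiteness⟩
  have hH'tilde_eq : H'tilde = ((μ + ν) Set.univ)⁻¹ • (μ + ν) := by
    have hrestrict : F.restrict A + ENNReal.ofReal κ • H = μ + ν := by
      rw [hF, Measure.restrict_add, Measure.restrict_smul, Measure.restrict_smul]
      simp only [μ, ν]; abel
    rw [hH'tilde, hrestrict, Measure.add_apply, hμ, hFA, add_right_comm]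
  have hκ_le_μ : ENNReal.ofReal κ ≤ μ Set.univ := hμ ▸ le_add_self
  have hν_lt : (ν Set.univ).toReal < ε :=
    ENNReal.toReal_lt_of_lt_ofReal ((hFA ▸ le_add_self).trans_lt hFAε)
  have hκ_le_μ' : κ ≤ (μ Set.univ).toReal :=
    (ENNReal.ofReal_le_iff_le_toReal (measure_ne_top μ _)).1 hκ_le_μ
  rw [hH', ← hμ, hH'tilde_eq]
  calc _ ≤ (ν Set.univ).toReal / (μ Set.univ).toReal :=
        abs_toReal_inv_smul_sub_inv_smul_add_le μ ν
          ((ENNReal.ofReal_pos.2 hκ0).trans_le hκ_le_μ).ne' S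
    _ ≤ ε / κ := div_le_div₀ hε.le hν_lt.le hκ0 hκ_le_μ'
    _ ≤ (1 + κ + κ) / (κ * κ) * ε := by
        rw [div_mul_eq_mul_div, div_le_div_iff₀ hκ0 (by positivity)]
        nlinarith

theorem stmt_11 {X : Type*} [MeasurableSpace X]
    (F G H : Measure X) [IsProbabilityMeasure F] [IsProbabilityMeasure G]
    [IsProbabilityMeasure H]
    (κ : ℝ) (hκ0 : 0 < κ) (hκ1 : κ < 1)
    (hF : F = ENNReal.ofReal (1 - κ) • G + ENNReal.ofReal κ • H)
    (A : Set X) (hA : MeasurableSet A) (hFA : 0 < F A) (hGAc : 0 < G Aᶜ)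
    (γ : ℝ) (hγ : γ = κ)
    (H' H'tilde : Measure X)
    (hH' : H' = (ENNReal.ofReal (1 - κ) * G A + ENNReal.ofReal κ)⁻¹ •
        (ENNReal.ofReal (1 - κ) • G.restrict A + ENNReal.ofReal κ • H))
    (hH'tilde : H'tilde = (F A + ENNReal.ofReal γ)⁻¹ •
        (F.restrict A + ENNReal.ofReal γ • H)) :
    ∀ ε : ℝ, 0 < ε → F A < ENNReal.ofReal ε →
      ∀ S : Set X, MeasurableSet S →
        |(H' S).toReal - (H'tilde S).toReal| ≤ (1 + γ + κ) / (κ * γ) * ε :=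
  stmt_11_general F G H κ hκ0 hF A γ hγ H' H'tilde hH' hH'tilde
end

section
/- Let F = (1-κ*)G + κ*H with κ* ∈ [0,1]. Suppose there exists a measurable set S* with H(S*) > 0 and G(S*) = 0 (anchor set condition). Then inf_{S: H(S)>0} F(S)/H(S) = κ*, and the infimum is achieved at S*. -/
open MeasureTheory ENNReal

theorem stmt_12 {X : Type*} [MeasurableSpace X]
    (F G H : Measure X) [IsProbabilityMeasure F] [IsProbabilityMeasure G]
    [IsProbabilityMeasure H]
    (κ : ℝ) (hκ0 : 0 ≤ κ) (hκ1 : κ ≤ 1)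
    (hF : F = ENNReal.ofReal (1 - κ) • G + ENNReal.ofReal κ • H)
    (Sstar : Set X) (hSstar : MeasurableSet Sstar)
    (hHS : 0 < H Sstar) (hGS : G Sstar = 0) :
    (⨅ (S : Set X) (_ : MeasurableSet S) (_ : 0 < H S), F S / H S) =
        ENNReal.ofReal κ ∧
      F Sstar / H Sstar = ENNReal.ofReal κ := by
  have hstar : F Sstar / H Sstar = ENNReal.ofReal κ := by
    have hFS : F Sstar = ENNReal.ofReal κ * H Sstar := by
      rw [hF]
      simp [Measure.add_apply, Measure.smul_apply, hGS, smul_eq_mul]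
    rw [hFS]
    rw [mul_div_assoc, ENNReal.div_self hHS.ne' (measure_ne_top H Sstar), mul_one]
  refine ⟨le_antisymm ?_ ?_, hstar⟩
  · exact hstar ▸ iInf₂_le_of_le Sstar hSstar (iInf_le _ hHS)
  · refine le_iInf fun S => le_iInf fun _ => le_iInf fun hS => ?_
    rw [ENNReal.le_div_iff_mul_le (Or.inl hS.ne') (Or.inl (measure_ne_top H S))]
    calc ENNReal.ofReal κ * H S
        ≤ ENNReal.ofReal (1 - κ) * G S + ENNReal.ofReal κ * H S := le_add_self
      _ = F S := by rw [hF]; simp [Measure.add_apply, Measure.smul_apply, smul_eq_mul]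
end

section
/- Consider binary labels Y ∈ {+1,-1} with class-conditional distributions P_+ = P(X|Y=+1) and P_- = P(X|Y=-1) having densities, and class priors π_+ > π_- > 0 with π_+ + π_- = 1. Let π_S = π_+² + π_-², P̃_S = (π_+² P_+ + π_-² P_-)/π_S, and P̃_D = (P_+ + P_-)/2. Then with α = π_S/(2π_+²), we have 0 < α < 1 and P̃_D = α·P̃_S + (1-α)·P_-. Hence P̃_D is reducible with respect to P̃_S. -/
open MeasureTheory ENNReal

theorem ofReal_smul_add_smul_add_ofReal_smul {M : Type*} [AddCommMonoid M] [Module ℝ≥0∞ M]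
    (x y : M) {a p q b : ℝ} (ha : 0 ≤ a) (hq : 0 ≤ q) (hb : 0 ≤ b) :
    ENNReal.ofReal a • (ENNReal.ofReal p • x + ENNReal.ofReal q • y) + ENNReal.ofReal b • y =
      ENNReal.ofReal (a * p) • x + ENNReal.ofReal (a * q + b) • y := by
  rw [smul_add, smul_smul, smul_smul, ← ENNReal.ofReal_mul ha, ← ENNReal.ofReal_mul ha,
    add_assoc, ← add_smul, ← ENNReal.ofReal_add (mul_nonneg ha hq) hb]

theorem stmt_15_general {X : Type*} [MeasurableSpace X]
    (Pp Pm : Measure X)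
    (πp πm : ℝ) (hπp : 0 < πp) (hsum : πp + πm = 1)
    (hgt : πm < πp)
    (πS : ℝ) (hπS : πS = πp ^ 2 + πm ^ 2)
    (PS PD : Measure X)
    (hPS : PS = ENNReal.ofReal (πp ^ 2 / πS) • Pp +
        ENNReal.ofReal (πm ^ 2 / πS) • Pm)
    (hPD : PD = ENNReal.ofReal (1 / 2) • Pp + ENNReal.ofReal (1 / 2) • Pm)
    (α : ℝ) (hα : α = πS / (2 * πp ^ 2)) :
    0 < α ∧ α < 1 ∧
      PD = ENNReal.ofReal α • PS + ENNReal.ofReal (1 - α) • Pm := by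
  have hπS_pos : 0 < πS := by rw [hπS]; positivity
  have hα_pos : 0 < α := by rw [hα]; positivity
  -- `πm ^ 2 < πp ^ 2` because `πp - πm > 0` and `πp + πm = 1 > 0`.
  have hα_lt_one : α < 1 := by
    rw [hα, div_lt_one (by positivity), hπS]
    nlinarith
  have hweight_p : α * (πp ^ 2 / πS) = 1 / 2 := by
    rw [hα]
    field_simp
  have hweight_m : α * (πm ^ 2 / πS) + (1 - α) = 1 / 2 := by
    rw [hα, hπS]
    field_simp
    ring
  refine ⟨hα_pos, hα_lt_one, ?_⟩
  rw [hPD, hPS, ofReal_smul_add_smul_add_ofReal_smul Pp Pm hα_pos.le (by positivity)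
    (sub_nonneg.mpr hα_lt_one.le), hweight_p, hweight_m]

theorem stmt_15 {X : Type*} [MeasurableSpace X]
    (Pp Pm : Measure X) [IsProbabilityMeasure Pp] [IsProbabilityMeasure Pm]
    (πp πm : ℝ) (hπp : 0 < πp) (hπm : 0 < πm) (hsum : πp + πm = 1)
    (hgt : πm < πp)
    (πS : ℝ) (hπS : πS = πp ^ 2 + πm ^ 2)
    (PS PD : Measure X)
    (hPS : PS = ENNReal.ofReal (πp ^ 2 / πS) • Pp +
        ENNReal.ofReal (πm ^ 2 / πS) • Pm)
    (hPD : PD = ENNReal.ofReal (1 / 2) • Pp + ENNReal.ofReal (1 / 2) • Pm)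
    (α : ℝ) (hα : α = πS / (2 * πp ^ 2)) :
    0 < α ∧ α < 1 ∧
      PD = ENNReal.ofReal α • PS + ENNReal.ofReal (1 - α) • Pm :=
  stmt_15_general Pp Pm πp πm hπp hsum hgt πS hπS PS PD hPS hPD α hα
end
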